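/- arXiv:1906.09783 — 2 statements merged into one kernel-verified Lean document; each statement's English description precedes it below -/
import Mathlib

section
/- Consider clustering by starting times: given a weighted graph G = (V, E, w), Δ > 0, a set N ⊆ V of centers with d_G(v, N) ≤ Δ for every v ∈ V, values δ_x ∈ [0, Δ] for each x ∈ N, and a fixed linear order on N, every vertex v joins the cluster C_x of the center x ∈ N maximizing δ_x − d_G(x, v), ties broken by taking the smallest such center in the order. Then every nonempty cluster C_x satisfies: (i) every v ∈ C_x has d_G(v, x) ≤ 2Δ; (ii) for every v ∈ C_x, every vertex u lying on a shortest path from v to x in G (i.e., with d_G(v, u) + d_G(u, x) = d_G(v, x)) also belongs to C_x; consequently C_x has strong diameter at most 4Δ. -/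
open MeasureTheory

namespace Pad

variable {V : Type*}

/-- The weight of a walk: the sum of the weights of its edges. -/
def walkWeight (w : Sym2 V → ℝ) {G : SimpleGraph V} {u v : V} (p : G.Walk u v) : ℝ :=
  (p.darts.map fun d => w d.edge).sum

/-- Shortest-path distance in the weighted graph `(G, w)`. -/
noncomputable def wdist (w : Sym2 V → ℝ) (G : SimpleGraph V) (u v : V) : ℝ :=
  sInf {x | ∃ p : G.Walk u v, x = walkWeight w p}

/-- Distance from a vertex to a set of vertices. -/
noncomputable def wdistSet (w : Sym2 V → ℝ) (G : SimpleGraph V) (v : V) (A : Set V) : ℝ :=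
  sInf {x | ∃ a ∈ A, x = wdist w G v a}

/-- The closed ball of radius `r` around `v`. -/
def ball (w : Sym2 V → ℝ) (G : SimpleGraph V) (v : V) (r : ℝ) : Set V :=
  {u | wdist w G v u ≤ r}

/-- Weight of a walk of an induced subgraph, measured with the weights of `G`. -/
def walkWeightI (w : Sym2 V → ℝ) {G : SimpleGraph V} {C : Set V} {u v : C}
    (p : (G.induce C).Walk u v) : ℝ :=
  (p.darts.map fun d => w (Sym2.map Subtype.val d.edge)).sum

/-- The cluster `C` has strong diameter at most `Δ`: every two vertices of `C` are joined,
inside the induced subgraph `G[C]`, by a walk of weight at most `Δ`. -/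
def StronglyBounded (w : Sym2 V → ℝ) (G : SimpleGraph V) (C : Set V) (Δ : ℝ) : Prop :=
  ∀ u v : C, ∃ p : (G.induce C).Walk u v, walkWeightI w p ≤ Δ

/-- A partition of `V`, given by the map `cl` sending a vertex to its cluster. -/
structure Partition (V : Type*) where
  cl : V → Set V
  mem_cl : ∀ v, v ∈ cl v
  cl_eq : ∀ u v, u ∈ cl v → cl u = cl v

/-- A partition is strongly `Δ`-bounded if each of its clusters has strong diameter at most `Δ`. -/
def Partition.StronglyBounded (w : Sym2 V → ℝ) (G : SimpleGraph V) (P : Partition V)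
    (Δ : ℝ) : Prop :=
  ∀ v : V, Pad.StronglyBounded w G (P.cl v) Δ

/-- `(G, w)` has doubling dimension `ddim`: every ball of radius `2r` can be covered by
`2 ^ ddim` balls of radius `r`. -/
def Doubling (w : Sym2 V → ℝ) (G : SimpleGraph V) (ddim : ℝ) : Prop :=
  ∀ (x : V) (r : ℝ), 0 < r → ∃ T : Set V, T.Finite ∧ ((T.ncard : ℝ) ≤ (2 : ℝ) ^ ddim) ∧
    ball w G x (2 * r) ⊆ ⋃ y ∈ T, ball w G y r

/-- `G` has the complete graph `K_r` as a minor: there are `r` pairwise disjoint connected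
branch sets with an edge of `G` between any two of them. -/
def HasCliqueMinor (G : SimpleGraph V) (r : ℕ) : Prop :=
  ∃ B : Fin r → Set V,
    (∀ i, (G.induce (B i)).Connected) ∧
    (Pairwise fun i j => Disjoint (B i) (B j)) ∧
    ∀ i j : Fin r, i ≠ j → ∃ u ∈ B i, ∃ v ∈ B j, G.Adj u v

/-- A shortest path: a path whose weight equals the distance between its endpoints. -/
def IsShortestPath (w : Sym2 V → ℝ) (G : SimpleGraph V) {u v : V} (p : G.Walk u v) : Prop :=
  p.IsPath ∧ walkWeight w p = wdist w G u v

/-- `G` has an `r`-core with radius `Δ`: there are at most `r` shortest paths such that every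
vertex is within distance `Δ` of their union. -/
def HasCore (w : Sym2 V → ℝ) (G : SimpleGraph V) (r : ℕ) (Δ : ℝ) : Prop :=
  ∃ r' : ℕ, r' ≤ r ∧ ∃ (a b : Fin r' → V) (p : ∀ i, G.Walk (a i) (b i)),
    (∀ i, IsShortestPath w G (p i)) ∧
    ∀ v : V, ∃ i, ∃ u ∈ (p i).support, wdist w G v u ≤ Δ

end Pad

namespace Pad

section Aux

variable {V : Type*} {G : SimpleGraph V}

theorem walkWeight_nonneg (w : Sym2 V → ℝ) (hw : ∀ e, 0 ≤ w e) {u v : V}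
    (p : G.Walk u v) : 0 ≤ walkWeight w p := by
  apply List.sum_nonneg
  intro a ha
  simp only [List.mem_map] at ha
  obtain ⟨d, _, rfl⟩ := ha
  exact hw _

theorem walkWeight_nil (w : Sym2 V → ℝ) {u : V} :
    walkWeight w (SimpleGraph.Walk.nil : G.Walk u u) = 0 := rfl

theorem walkWeight_append (w : Sym2 V → ℝ) {u v t : V} (p : G.Walk u v) (q : G.Walk v t) :
    walkWeight w (p.append q) = walkWeight w p + walkWeight w q := by
  simp [walkWeight, SimpleGraph.Walk.darts_append]

theorem walkWeight_reverse (w : Sym2 V → ℝ) {u v : V} (p : G.Walk u v) :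
    walkWeight w p.reverse = walkWeight w p := by
  simp [walkWeight, SimpleGraph.Walk.darts_reverse, List.map_reverse,
    List.sum_reverse, List.map_map, Function.comp_def, SimpleGraph.Dart.edge_symm]

theorem wdist_le (w : Sym2 V → ℝ) (hw : ∀ e, 0 ≤ w e) {u v : V} (p : G.Walk u v) :
    wdist w G u v ≤ walkWeight w p :=
  csInf_le ⟨0, fun x hx => by obtain ⟨q, rfl⟩ := hx; exact walkWeight_nonneg w hw q⟩ ⟨p, rfl⟩

theorem wdist_nonneg (w : Sym2 V → ℝ) (hw : ∀ e, 0 ≤ w e) (hG : G.Connected) (u v : V) :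
    0 ≤ wdist w G u v :=
  le_csInf ⟨walkWeight w (hG.preconnected u v).some, (hG.preconnected u v).some, rfl⟩
    (fun x hx => by obtain ⟨q, rfl⟩ := hx; exact walkWeight_nonneg w hw q)

theorem walkWeight_dropUntil_le [DecidableEq V] (w : Sym2 V → ℝ) (hw : ∀ e, 0 ≤ w e) {u v t : V}
    (p : G.Walk u v) (ht : t ∈ p.support) :
    walkWeight w (p.dropUntil t ht) ≤ walkWeight w p := by
  classical
  have := congrArg (walkWeight w) (p.take_spec ht)
  rw [walkWeight_append] at this
  have h0 := walkWeight_nonneg w hw (p.takeUntil t ht)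
  linarith

theorem walkWeight_bypass_le [DecidableEq V] (w : Sym2 V → ℝ) (hw : ∀ e, 0 ≤ w e) :
    ∀ {u v : V} (p : G.Walk u v), walkWeight w p.bypass ≤ walkWeight w p := by
  classical
  intro u v p
  induction p with
  | nil => exact le_rfl
  | cons h p ih =>
    rw [SimpleGraph.Walk.bypass.eq_def]
    dsimp only
    split_ifs with hs
    · calc walkWeight w (p.bypass.dropUntil _ hs) ≤ walkWeight w p.bypass :=
            walkWeight_dropUntil_le w hw _ hs
        _ ≤ walkWeight w p := ih
        _ ≤ walkWeight w (SimpleGraph.Walk.cons h p) := by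
            simp only [walkWeight, SimpleGraph.Walk.darts_cons, List.map_cons, List.sum_cons]
            have := hw (SimpleGraph.Dart.edge ⟨(_, _), h⟩)
            linarith
    · simp only [walkWeight, SimpleGraph.Walk.darts_cons, List.map_cons, List.sum_cons]
      have := ih
      simp only [walkWeight] at this
      linarith

theorem exists_walk_eq_wdist [Fintype V] [DecidableEq V]
    (w : Sym2 V → ℝ) (hw : ∀ e, 0 ≤ w e) (hG : G.Connected) (u v : V) :
    ∃ p : G.Walk u v, walkWeight w p = wdist w G u v := by
  classical
  have hne : Nonempty (G.Path u v) :=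
    ⟨⟨(hG.preconnected u v).some.bypass, SimpleGraph.Walk.bypass_isPath _⟩⟩
  have : Finite (G.Path u v) := by
    have : DecidableRel G.Adj := Classical.decRel _
    infer_instance
  obtain ⟨q, hq⟩ := Finite.exists_min (fun q : G.Path u v => walkWeight w q.1)
  refine ⟨q.1, le_antisymm ?_ (wdist_le w hw _)⟩
  refine le_csInf ⟨walkWeight w q.1, q.1, rfl⟩ ?_
  rintro x ⟨p, rfl⟩
  calc walkWeight w q.1 ≤ walkWeight w p.bypass :=
        hq ⟨p.bypass, SimpleGraph.Walk.bypass_isPath _⟩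
    _ ≤ walkWeight w p := walkWeight_bypass_le w hw p

theorem wdist_symm (w : Sym2 V → ℝ) (hw : ∀ e, 0 ≤ w e) [Fintype V] [DecidableEq V]
    (hG : G.Connected) (u v : V) : wdist w G u v = wdist w G v u := by
  have key : ∀ a b : V, wdist w G a b ≤ wdist w G b a := by
    intro a b
    obtain ⟨p, hp⟩ := exists_walk_eq_wdist w hw hG b a
    calc wdist w G a b ≤ walkWeight w p.reverse := wdist_le w hw _
      _ = walkWeight w p := walkWeight_reverse w p
      _ = wdist w G b a := hp
  exact le_antisymm (key u v) (key v u)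

theorem wdist_self (w : Sym2 V → ℝ) (hw : ∀ e, 0 ≤ w e) (hG : G.Connected) (u : V) :
    wdist w G u u = 0 :=
  le_antisymm (wdist_le w hw (SimpleGraph.Walk.nil : G.Walk u u))
    (wdist_nonneg w hw hG u u)

theorem wdist_triangle (w : Sym2 V → ℝ) (hw : ∀ e, 0 ≤ w e) [Fintype V] [DecidableEq V]
    (hG : G.Connected) (u v t : V) :
    wdist w G u t ≤ wdist w G u v + wdist w G v t := by
  obtain ⟨p, hp⟩ := exists_walk_eq_wdist w hw hG u v
  obtain ⟨q, hq⟩ := exists_walk_eq_wdist w hw hG v t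
  calc wdist w G u t ≤ walkWeight w (p.append q) := wdist_le w hw _
    _ = wdist w G u v + wdist w G v t := by rw [walkWeight_append, hp, hq]

theorem wdist_split (w : Sym2 V → ℝ) (hw : ∀ e, 0 ≤ w e) [Fintype V] [DecidableEq V]
    (hG : G.Connected) {u v t : V} (p : G.Walk u v)
    (hp : walkWeight w p = wdist w G u v) (ht : t ∈ p.support) :
    wdist w G u t + wdist w G t v = wdist w G u v := by
  have h1 : wdist w G u t ≤ walkWeight w (p.takeUntil t ht) := wdist_le w hw _
  have h2 : wdist w G t v ≤ walkWeight w (p.dropUntil t ht) := wdist_le w hw _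
  have h3 := congrArg (walkWeight w) (p.take_spec ht)
  rw [walkWeight_append] at h3
  have h4 := wdist_triangle w hw hG u t v
  linarith [hp ▸ h3]

theorem exists_induced_walk (w : Sym2 V → ℝ) {C : Set V} :
    ∀ {a b : V} (p : G.Walk a b) (hsub : ∀ t ∈ p.support, t ∈ C) (ha : a ∈ C) (hb : b ∈ C),
      ∃ q : (G.induce C).Walk ⟨a, ha⟩ ⟨b, hb⟩, walkWeightI w q = walkWeight w p := by
  intro a b p
  induction p with
  | nil => exact fun _ _ _ => ⟨SimpleGraph.Walk.nil, rfl⟩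
  | @cons a c b h p ih =>
    intro hsub ha hb
    have hc : c ∈ C := hsub c (by simp)
    obtain ⟨q, hq⟩ := ih (fun t ht => hsub t (by simp [ht])) hc hb
    refine ⟨SimpleGraph.Walk.cons (by simpa using h : (G.induce C).Adj ⟨a, ha⟩ ⟨c, hc⟩) q, ?_⟩
    simp only [walkWeightI, walkWeight, SimpleGraph.Walk.darts_cons, List.map_cons,
      List.sum_cons] at hq ⊢
    rw [hq]
    congr 1

theorem walkWeightI_append (w : Sym2 V → ℝ) {C : Set V} {u v t : C}
    (p : (G.induce C).Walk u v) (q : (G.induce C).Walk v t) :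
    walkWeightI w (p.append q) = walkWeightI w p + walkWeightI w q := by
  simp [walkWeightI, SimpleGraph.Walk.darts_append]

theorem walkWeightI_reverse (w : Sym2 V → ℝ) {C : Set V} {u v : C}
    (p : (G.induce C).Walk u v) :
    walkWeightI w p.reverse = walkWeightI w p := by
  simp [walkWeightI, SimpleGraph.Walk.darts_reverse, List.map_reverse,
    List.sum_reverse, List.map_map, Function.comp_def, SimpleGraph.Dart.edge_symm]

end Aux

end Pad

/-- In the clustering by starting times, every nonempty cluster `C_x` satisfies:
(i) every `v ∈ C_x` has `d_G(v,x) ≤ 2Δ`; (ii) `C_x` is closed under taking vertices on shortest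
paths towards `x`; consequently `C_x` has strong diameter at most `4Δ`. -/
theorem starting_times_cluster_strong_diameter
    (V : Type) [Fintype V] [LinearOrder V] (G : SimpleGraph V) (hG : G.Connected)
    (w : Sym2 V → ℝ) (hw : ∀ e, 0 ≤ w e)
    (Δ : ℝ) (hΔ : 0 < Δ)
    (N : Set V)
    (hcov : ∀ v : V, ∃ x ∈ N, Pad.wdist w G v x ≤ Δ)
    (δ : V → ℝ) (hδ : ∀ x ∈ N, δ x ∈ Set.Icc (0 : ℝ) Δ)
    -- `f v` is the center whose cluster `v` joins:
    (f : V → V)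
    (hfN : ∀ v, f v ∈ N)
    (hmax : ∀ v, ∀ y ∈ N, δ y - Pad.wdist w G y v ≤ δ (f v) - Pad.wdist w G (f v) v)
    (htie : ∀ v, ∀ y ∈ N, δ y - Pad.wdist w G y v = δ (f v) - Pad.wdist w G (f v) v → f v ≤ y)
    (x : V) (hx : x ∈ N) :
    (∀ v, f v = x → Pad.wdist w G v x ≤ 2 * Δ) ∧
    (∀ v, f v = x → ∀ u, Pad.wdist w G v u + Pad.wdist w G u x = Pad.wdist w G v x → f u = x) ∧
    Pad.StronglyBounded w G {v | f v = x} (4 * Δ) := by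
  classical
  have hsymm := Pad.wdist_symm w hw (G := G) hG
  have htri := Pad.wdist_triangle w hw (G := G) hG
  have hself := Pad.wdist_self w hw (G := G) hG
  have part1 : ∀ v, f v = x → Pad.wdist w G v x ≤ 2 * Δ := by
    intro v hfv
    obtain ⟨y, hyN, hyv⟩ := hcov v
    have h1 := hmax v y hyN
    rw [hfv] at h1
    have h2 := (hδ y hyN).1
    have h3 := (hδ x hx).2
    have h4 : Pad.wdist w G y v = Pad.wdist w G v y := hsymm y v
    have h5 : Pad.wdist w G x v = Pad.wdist w G v x := hsymm x v
    linarith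
  have part2 : ∀ v, f v = x → ∀ u,
      Pad.wdist w G v u + Pad.wdist w G u x = Pad.wdist w G v x → f u = x := by
    intro v hfv u hsp
    have hzN := hfN u
    have key1 : δ x - Pad.wdist w G x u ≤ δ (f u) - Pad.wdist w G (f u) u := hmax u x hx
    have key2 : δ (f u) - Pad.wdist w G (f u) v ≤ δ x - Pad.wdist w G x v := by
      have := hmax v (f u) hzN; rwa [hfv] at this
    have h4 := htri (f u) u v
    have s1 := hsymm x u
    have s2 := hsymm u v
    have s3 := hsymm x v
    have t1 : f u ≤ x := htie u x hx (by linarith)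
    have t2 : x ≤ f u := by
      have := htie v (f u) hzN (by rw [hfv]; linarith)
      rwa [hfv] at this
    exact le_antisymm t1 t2
  refine ⟨part1, part2, ?_⟩
  intro u v
  have hu : f (u : V) = x := u.2
  have hv : f (v : V) = x := v.2
  obtain ⟨p, hp⟩ := Pad.exists_walk_eq_wdist w hw hG (u : V) x
  obtain ⟨q, hq⟩ := Pad.exists_walk_eq_wdist w hw hG (v : V) x
  have hpsub : ∀ t ∈ p.support, t ∈ {v | f v = x} := fun t ht =>
    part2 u hu t (Pad.wdist_split w hw hG p hp ht)
  have hqsub : ∀ t ∈ q.support, t ∈ {v | f v = x} := fun t ht =>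
    part2 v hv t (Pad.wdist_split w hw hG q hq ht)
  have hxC : x ∈ {v | f v = x} := hpsub x p.end_mem_support
  obtain ⟨q1, hq1⟩ := Pad.exists_induced_walk w p hpsub u.2 hxC
  obtain ⟨q2, hq2⟩ := Pad.exists_induced_walk w q hqsub v.2 hxC
  refine ⟨q1.append q2.reverse, ?_⟩
  rw [Pad.walkWeightI_append, Pad.walkWeightI_reverse, hq1, hq2, hp, hq]
  have g1 := part1 u hu
  have g2 := part1 v hv
  linarith
end

section
/- Let λ > 0, γ > 0, and ρ ≥ 0, and let Y be a random variable distributed according to Texp(λ). Then Pr[ρ ≤ Y ≤ ρ + 2γ] ≤ (1 − e^{-2γλ}) · (Pr[Y ≥ ρ] + 1/(e^{λ} − 1)). -/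
open MeasureTheory

namespace Pad

/-- The `[0,1]`-truncated exponential distribution with parameter `l`: the measure on `ℝ`
with density `y ↦ l·e^{-l·y}/(1 - e^{-l})` on `[0,1]` (and `0` elsewhere). -/
noncomputable def texp (l : ℝ) : MeasureTheory.Measure ℝ :=
  MeasureTheory.volume.withDensity fun y =>
    ENNReal.ofReal
      (if y ∈ Set.Icc (0 : ℝ) 1 then l * Real.exp (-(l * y)) / (1 - Real.exp (-l)) else 0)

end Pad

/-! Write `c = 1 - e^{-l}`. Integrating the density gives
`Pr[ρ ≤ Y ≤ ρ + 2γ] ≤ (e^{-lρ} - e^{-l(ρ+2γ)}) / c = (1 - e^{-2γl}) · e^{-lρ} / c`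
and `Pr[Y ≥ ρ] ≥ Pr[ρ ≤ Y ≤ 1] = (e^{-lρ} - e^{-l}) / c`. Since `1 / (e^l - 1) = e^{-l} / c`,
the second factor of the claim is at least `e^{-lρ} / c`. -/

open Real Set

theorem integral_mul_exp_neg_mul (l a b : ℝ) :
    ∫ y in a..b, l * exp (-(l * y)) = exp (-(l * a)) - exp (-(l * b)) := by
  have hderiv (y : ℝ) : HasDerivAt (fun x => -exp (-(l * x))) (l * exp (-(l * y))) y := by
    simpa [mul_comm] using (((hasDerivAt_id' y).const_mul l).fun_neg.exp).fun_neg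
  rw [intervalIntegral.integral_eq_sub_of_hasDerivAt (fun y _ => hderiv y)
    ((by fun_prop : Continuous fun y => l * exp (-(l * y))).intervalIntegrable a b)]
  ring

theorem setLIntegral_Icc_ofReal_mul_exp_neg_mul_div {l c a b : ℝ} (hl : 0 ≤ l) (hc : 0 ≤ c)
    (hab : a ≤ b) :
    ∫⁻ y in Icc a b, ENNReal.ofReal (l * exp (-(l * y)) / c) =
      ENNReal.ofReal ((exp (-(l * a)) - exp (-(l * b))) / c) := by
  rw [← ofReal_integral_eq_lintegral_ofReal
      (by fun_prop : Continuous fun y => l * exp (-(l * y)) / c).integrableOn_Icc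
      (.of_forall fun y => by positivity),
    integral_Icc_eq_integral_Ioc, ← intervalIntegral.integral_of_le hab,
    intervalIntegral.integral_div, integral_mul_exp_neg_mul]

theorem one_div_exp_sub_one (l : ℝ) : 1 / (exp l - 1) = exp (-l) / (1 - exp (-l)) := by
  rw [exp_neg]
  field_simp

theorem one_sub_exp_neg_pos {l : ℝ} (hl : 0 < l) : 0 < 1 - exp (-l) := by
  simpa using hl

namespace Pad

theorem texp_Icc_le {l : ℝ} (hl : 0 < l) (a b : ℝ) :
    texp l (Icc a b) ≤ ENNReal.ofReal ((exp (-(l * a)) - exp (-(l * b))) / (1 - exp (-l))) := by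
  rcases lt_or_ge b a with hba | hab
  · simp [Icc_eq_empty_of_lt hba]
  rw [texp, withDensity_apply _ measurableSet_Icc,
    ← setLIntegral_Icc_ofReal_mul_exp_neg_mul_div hl.le (one_sub_exp_neg_pos hl).le hab]
  refine lintegral_mono fun y => ENNReal.ofReal_le_ofReal ?_
  split_ifs
  · rfl
  · have := one_sub_exp_neg_pos hl
    positivity

/-- For `a > 1` the left side is `ENNReal.ofReal` of a negative number, i.e. `0`. -/
theorem ofReal_le_texp_Ici {l a : ℝ} (hl : 0 < l) (ha : 0 ≤ a) :
    ENNReal.ofReal ((exp (-(l * a)) - exp (-l)) / (1 - exp (-l))) ≤ texp l (Ici a) := by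
  rcases lt_or_ge 1 a with h1a | ha1
  · rw [ENNReal.ofReal_of_nonpos]
    · exact zero_le
    · have : exp (-(l * a)) ≤ exp (-l) := exp_le_exp.2 (by nlinarith)
      exact div_nonpos_of_nonpos_of_nonneg (by linarith) (one_sub_exp_neg_pos hl).le
  have hIcc :
      texp l (Icc a 1) = ENNReal.ofReal ((exp (-(l * a)) - exp (-l)) / (1 - exp (-l))) := by
    have h := setLIntegral_Icc_ofReal_mul_exp_neg_mul_div hl.le (one_sub_exp_neg_pos hl).le ha1
    rw [mul_one] at h
    rw [texp, withDensity_apply _ measurableSet_Icc, ← h]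
    refine setLIntegral_congr_fun measurableSet_Icc fun y hy => ?_
    rw [if_pos ⟨ha.trans hy.1, hy.2⟩]
  exact hIcc ▸ measure_mono fun y hy => hy.1

end Pad

theorem texp_interval_prob_le_general
    (l γ ρ : ℝ) (hl : 0 < l) (hρ : 0 ≤ ρ)
    (Ω : Type) [MeasurableSpace Ω] (μ : MeasureTheory.Measure Ω)
    (Y : Ω → ℝ) (hY : Measurable Y) (hlaw : μ.map Y = Pad.texp l) :
    μ {ω | ρ ≤ Y ω ∧ Y ω ≤ ρ + 2 * γ} ≤
      ENNReal.ofReal (1 - Real.exp (-(2 * γ * l))) *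
        (μ {ω | ρ ≤ Y ω} + ENNReal.ofReal (1 / (Real.exp l - 1))) := by
  have hc := one_sub_exp_neg_pos hl
  have hIcc : μ {ω | ρ ≤ Y ω ∧ Y ω ≤ ρ + 2 * γ} = Pad.texp l (Icc ρ (ρ + 2 * γ)) := by
    rw [← hlaw, Measure.map_apply hY measurableSet_Icc]; rfl
  have hIci : μ {ω | ρ ≤ Y ω} = Pad.texp l (Ici ρ) := by
    rw [← hlaw, Measure.map_apply hY measurableSet_Ici]; rfl
  have hsplit : exp (-(l * ρ)) / (1 - exp (-l)) =
      (exp (-(l * ρ)) - exp (-l)) / (1 - exp (-l)) + 1 / (exp l - 1) := by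
    rw [one_div_exp_sub_one]; ring
  rw [hIcc, hIci]
  calc Pad.texp l (Icc ρ (ρ + 2 * γ))
      ≤ ENNReal.ofReal ((exp (-(l * ρ)) - exp (-(l * (ρ + 2 * γ)))) / (1 - exp (-l))) :=
        Pad.texp_Icc_le hl _ _
    _ = ENNReal.ofReal (1 - exp (-(2 * γ * l))) *
          ENNReal.ofReal (exp (-(l * ρ)) / (1 - exp (-l))) := by
        rw [← ENNReal.ofReal_mul' (by positivity), mul_div_assoc', one_sub_mul, ← exp_add]
        ring_nf
    _ ≤ _ := by
        gcongr
        rw [hsplit]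
        exact ENNReal.ofReal_add_le.trans (add_le_add_left (Pad.ofReal_le_texp_Ici hl hρ) _)

/-- For `Y ∼ Texp(l)`, `λ > 0`, `γ > 0` and `ρ ≥ 0`,
`Pr[ρ ≤ Y ≤ ρ + 2γ] ≤ (1 - e^{-2γl}) · (Pr[Y ≥ ρ] + 1/(e^l - 1))`. -/
theorem texp_interval_prob_le
    (l γ ρ : ℝ) (hl : 0 < l) (hγ : 0 < γ) (hρ : 0 ≤ ρ)
    (Ω : Type) [MeasurableSpace Ω] (μ : MeasureTheory.Measure Ω)
    [MeasureTheory.IsProbabilityMeasure μ]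
    (Y : Ω → ℝ) (hY : Measurable Y) (hlaw : μ.map Y = Pad.texp l) :
    μ {ω | ρ ≤ Y ω ∧ Y ω ≤ ρ + 2 * γ} ≤
      ENNReal.ofReal (1 - Real.exp (-(2 * γ * l))) *
        (μ {ω | ρ ≤ Y ω} + ENNReal.ofReal (1 / (Real.exp l - 1))) :=
  texp_interval_prob_le_general l γ ρ hl hρ Ω μ Y hY hlaw
end
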